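/- arXiv:2604.23598 — 2 statements merged into one kernel-verified Lean document; each statement's English description precedes it below -/
import Mathlib

section
/- Let E ⊂ ℝ, α ∈ (0,1), and let f : ℝ → ℝ be α-Hölder continuous on ℝ and continuously differentiable on ℝ∖E. Assume the α-dimensional Hausdorff measure of E is zero, H^α(E) = 0, and that ∫_{ℝ∖E} |f′(x)| dx < ∞. Then f is absolutely continuous on every compact interval of ℝ. -/
open MeasureTheory Set Filter Topology
open scoped ENNReal NNReal

private lemma rpow_subadd {x y p : ℝ} (hx : 0 ≤ x) (hy : 0 ≤ y) (hp0 : 0 ≤ p) (hp1 : p ≤ 1) :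
    (x + y) ^ p ≤ x ^ p + y ^ p := by
  have h := NNReal.rpow_add_le_add_rpow x.toNNReal y.toNNReal hp0 hp1
  have h2 := NNReal.coe_le_coe.2 h
  push_cast [NNReal.coe_rpow] at h2
  rwa [Real.coe_toNNReal x hx, Real.coe_toNNReal y hy] at h2

private lemma exists_cover (E : Set ℝ) {α : ℝ} (hα0 : 0 < α) (hα1 : α ≤ 1) (hE : μH[α] E = 0)
    {η : ℝ} (hη : 0 < η) :
    ∃ a b : ℕ → ℝ, (∀ n, a n < b n) ∧ E ⊆ ⋃ n, Ioo (a n) (b n) ∧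
      Summable (fun n => (b n - a n) ^ α) ∧ ∑' n, (b n - a n) ^ α ≤ η := by
  classical
  set η' := η / 8 with hη'def
  have hη' : 0 < η' := by positivity
  rw [Measure.hausdorffMeasure_apply] at hE
  have h0 := hE.le
  rw [iSup₂_le_iff] at h0
  have h2 : (⨅ (t : ℕ → Set ℝ) (_ : E ⊆ ⋃ n, t n) (_ : ∀ n, EMetric.diam (t n) ≤ 1),
      ∑' n, ⨆ _ : (t n).Nonempty, EMetric.diam (t n) ^ α) < ENNReal.ofReal η' :=
    lt_of_le_of_lt (h0 1 zero_lt_one) (by simpa using ENNReal.ofReal_pos.2 hη')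
  rw [iInf_lt_iff] at h2
  obtain ⟨t, h2⟩ := h2
  rw [iInf_lt_iff] at h2
  obtain ⟨hcov, h2⟩ := h2
  rw [iInf_lt_iff] at h2
  obtain ⟨hdiam, h2⟩ := h2
  have hfin : ∀ n, EMetric.diam (t n) ≠ ∞ :=
    fun n => ((hdiam n).trans_lt ENNReal.one_lt_top).ne
  set D : ℕ → ℝ := fun n => (EMetric.diam (t n)).toReal with hD
  have hD0 : ∀ n, 0 ≤ D n := fun n => ENNReal.toReal_nonneg
  set r : ℕ → ℝ := fun n => (η' * (1/2) ^ (n+1)) ^ α⁻¹ with hrdef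
  have hrpos : ∀ n, 0 < r n := fun n => Real.rpow_pos_of_pos (by positivity) _
  have hrα : ∀ n, r n ^ α = η' * (1/2)^(n+1) := fun n => by
    rw [hrdef]
    exact Real.rpow_inv_rpow (by positivity) hα0.ne'
  set x : ℕ → ℝ := fun n => if h : (t n).Nonempty then h.choose else 0 with hx
  refine ⟨fun n => x n - D n - r n, fun n => x n + D n + r n, fun n => show x n - D n - r n < x n + D n + r n by nlinarith [hrpos n, hD0 n], ?_, ?_, ?_⟩
  · -- covering
    intro e he
    obtain ⟨n, hn⟩ := mem_iUnion.1 (hcov he)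
    have hne : (t n).Nonempty := ⟨e, hn⟩
    have hxn : x n ∈ t n := by rw [hx]; simp only [hne, dif_pos]; exact hne.choose_spec
    have hed : dist e (x n) ≤ D n := by
      have h3 : edist e (x n) ≤ EMetric.diam (t n) := EMetric.edist_le_diam_of_mem hn hxn
      have := ENNReal.toReal_mono (hfin n) h3
      rwa [← dist_edist] at this
    rw [Real.dist_eq] at hed
    have := abs_le.1 hed
    refine mem_iUnion.2 ⟨n, ?_⟩
    simp only [mem_Ioo]
    constructor <;> nlinarith [hrpos n, this.1, this.2]
  all_goals {
    have hlen : ∀ n, (x n + D n + r n) - (x n - D n - r n) = 2*D n + 2*r n := fun n => by ring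
    have htermfin : ∀ n, (⨆ _ : (t n).Nonempty, EMetric.diam (t n) ^ α) ≠ ∞ :=
      fun n => ENNReal.lt_top_of_tsum_ne_top h2.ne_top n |>.ne
    have hDα : ∀ n, D n ^ α = (⨆ _ : (t n).Nonempty, EMetric.diam (t n) ^ α).toReal := by
      intro n
      by_cases h : (t n).Nonempty
      · simp only [h, ciSup_unique]
        rw [hD, ENNReal.toReal_rpow]
      · have ht : t n = ∅ := not_nonempty_iff_eq_empty.mp h
        simp [h, hD, ht, EMetric.diam, Metric.ediam_empty, Real.zero_rpow hα0.ne']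
    have hsumD : Summable (fun n => D n ^ α) := by
      simp_rw [hDα]
      exact ENNReal.summable_toReal h2.ne_top
    have hDsum : ∑' n, D n ^ α ≤ η' := by
      have := ENNReal.tsum_toReal_eq htermfin
      calc ∑' n, D n ^ α = (∑' n, ⨆ _ : (t n).Nonempty, EMetric.diam (t n) ^ α).toReal := by
            simp_rw [hDα]; exact this.symm
        _ ≤ (ENNReal.ofReal η').toReal := ENNReal.toReal_mono ENNReal.ofReal_ne_top h2.le
        _ = η' := ENNReal.toReal_ofReal hη'.le
    have hgeo : Summable (fun n : ℕ => (1/2:ℝ)^(n+1)) := by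
      simp_rw [pow_succ]
      exact (summable_geometric_of_lt_one (by norm_num) (by norm_num)).mul_right _
    have hgeosum : ∑' n : ℕ, (1/2:ℝ)^(n+1) = 1 := by
      simp_rw [pow_succ]
      rw [tsum_mul_right, tsum_geometric_two]
      norm_num
    have hbound : ∀ n, (2*D n + 2*r n)^α ≤ 2*(D n ^ α) + 2*η'*(1/2)^(n+1) := by
      intro n
      have h3 : (2*D n + 2*r n)^α ≤ (2*D n)^α + (2*r n)^α :=
        rpow_subadd (by nlinarith [hD0 n]) (by nlinarith [hrpos n]) hα0.le hα1
      have h2α : (2:ℝ)^α ≤ 2 := by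
        calc (2:ℝ)^α ≤ (2:ℝ)^(1:ℝ) := Real.rpow_le_rpow_of_exponent_le one_le_two hα1
          _ = 2 := Real.rpow_one 2
      have h4 : (2*D n)^α ≤ 2 * D n ^ α := by
        rw [Real.mul_rpow (by norm_num) (hD0 n)]
        exact mul_le_mul_of_nonneg_right h2α (Real.rpow_nonneg (hD0 n) α)
      have h5 : (2*r n)^α ≤ 2 * r n ^ α := by
        rw [Real.mul_rpow (by norm_num) (hrpos n).le]
        exact mul_le_mul_of_nonneg_right h2α (Real.rpow_nonneg (hrpos n).le α)
      have h6 := hrα n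
      nlinarith [hrpos n]
    have hg : Summable (fun n => 2*(D n ^ α) + 2*η'*(1/2)^(n+1)) :=
      (hsumD.mul_left 2).add ((hgeo.mul_left (2*η')))
    have hsummable : Summable (fun n => ((x n + D n + r n) - (x n - D n - r n)) ^ α) := by
      refine Summable.of_nonneg_of_le (fun n => Real.rpow_nonneg (by nlinarith [hrpos n, hD0 n]) α) (fun n => ?_) hg
      rw [hlen n]; exact hbound n
    first
      | exact hsummable
      | { refine le_trans (Summable.tsum_le_tsum (fun n => by rw [hlen n]; exact hbound n) hsummable hg) ?_
          rw [Summable.tsum_add (hsumD.mul_left 2) (hgeo.mul_left (2*η')), tsum_mul_left, tsum_mul_left, hgeosum]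
          rw [hη'def] at hDsum ⊢
          nlinarith [hDsum, hη] }
  }

set_option maxHeartbeats 1000000 in
private lemma key_lemma (E : Set ℝ) {α : ℝ} (hα0 : 0 < α) (hα1 : α < 1) (f f' : ℝ → ℝ)
    {K : ℝ} (hK : 0 < K)
    (hHolder : ∀ x y : ℝ, |f x - f y| ≤ K * |x - y| ^ α)
    (hderiv : ∀ x ∉ E, HasDerivAt f (f' x) x)
    (hderivcont : ContinuousOn f' Eᶜ)
    (hE : μH[α] E = 0)
    (hvol : volume E = 0)
    (habs : Integrable (fun t => |f' t|) volume)
    {c d : ℝ} (hcd : c ≤ d) :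
    f d - f c ≤ ∫ t in Ioc c d, |f' t| := by
  classical
  -- continuity of f
  have hf : Continuous f := by
    rw [Metric.continuous_iff]
    intro z ε hε
    refine ⟨(ε/(2*K)) ^ α⁻¹, Real.rpow_pos_of_pos (div_pos hε (by linarith)) _, fun y hy => ?_⟩
    have h1 : |y - z| ^ α < ((ε/(2*K)) ^ α⁻¹) ^ α := by
      apply Real.rpow_lt_rpow (abs_nonneg _) _ hα0
      rwa [Real.dist_eq] at hy
    rw [Real.rpow_inv_rpow (div_pos hε (by linarith)).le hα0.ne'] at h1
    have h2 := hHolder y z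
    rw [Real.dist_eq]
    calc |f y - f z| ≤ K * |y - z| ^ α := h2
      _ < K * (ε/(2*K)) := by exact (mul_lt_mul_iff_right₀ hK).2 h1
      _ = ε/2 := by field_simp
      _ < ε := by linarith
  have hEae : ∀ᵐ z ∂(volume : Measure ℝ), z ∉ E := by
    rw [ae_iff]
    simpa [not_not] using hvol
  -- primitive
  set F : ℝ → ℝ := fun z => ∫ t in c..z, |f' t| with hFdef
  have hFcont : Continuous F := habs.continuous_primitive c
  have hFadd : ∀ u v : ℝ, u ≤ v → F v = F u + ∫ t in Ioc u v, |f' t| := by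
    intro u v huv
    rw [hFdef]
    simp only
    rw [← intervalIntegral.integral_add_adjacent_intervals (a := c) (b := u) (c := v)
      habs.intervalIntegrable habs.intervalIntegrable,
      intervalIntegral.integral_of_le huv]
  have hIocnonneg : ∀ u v : ℝ, 0 ≤ ∫ t in Ioc u v, |f' t| :=
    fun u v => setIntegral_nonneg measurableSet_Ioc (fun t _ => abs_nonneg _)
  refine le_of_forall_pos_le_add fun ζ hζ => ?_
  set ε₀ : ℝ := ζ / (2 * (d - c + 1)) with hε₀def
  have hε₀ : 0 < ε₀ := div_pos hζ (by linarith)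
  set η : ℝ := ζ / (2 * K) with hηdef
  have hη : 0 < η := div_pos hζ (by linarith)
  obtain ⟨a, b, hab, hcover, hsummable, htsum⟩ := exists_cover E hα0 hα1.le hE hη
  set ℓ : ℕ → ℝ := fun n => (b n - a n) ^ α with hℓdef
  have hℓ0 : ∀ n, 0 ≤ ℓ n := fun n => Real.rpow_nonneg (by linarith [hab n]) α
  have h0le : ∀ (z : ℝ) (n : ℕ), 0 ≤ if min (b n) d ≤ z then ℓ n else 0 := fun z n => by
    split
    exacts [hℓ0 n, le_rfl]
  have hlele : ∀ (z : ℝ) (n : ℕ), (if min (b n) d ≤ z then ℓ n else 0) ≤ ℓ n := fun z n => by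
    split
    exacts [le_rfl, hℓ0 n]
  set ψ : ℝ → ℝ := fun z => ∑' n, if min (b n) d ≤ z then ℓ n else 0 with hψdef
  have hψs : ∀ z, Summable (fun n => if min (b n) d ≤ z then ℓ n else 0) :=
    fun z => Summable.of_nonneg_of_le (h0le z) (hlele z) hsummable
  have hψmono : ∀ z w : ℝ, z ≤ w → ψ z ≤ ψ w := by
    intro z w hzw
    refine Summable.tsum_le_tsum (fun n => ?_) (hψs z) (hψs w)
    split
    · rename_i h
      rw [if_pos (le_trans h hzw)]
    · exact h0le w n
  have hψnonneg : ∀ z, 0 ≤ ψ z := fun z => tsum_nonneg (h0le z)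
  have hψle : ∀ z, ψ z ≤ η := fun z =>
    le_trans (Summable.tsum_le_tsum (hlele z) (hψs z) hsummable) htsum
  have hψjump : ∀ (n : ℕ) (z w : ℝ), z < min (b n) d → min (b n) d ≤ w →
      ψ z + ℓ n ≤ ψ w := by
    intro n z w hz hw
    have hs2 : Summable (fun k : ℕ => if k = n then ℓ n else 0) :=
      summable_of_ne_finset_zero (s := {n}) (fun k hk => if_neg (by simpa using hk))
    have e1 : ψ z + ℓ n
        = ∑' k, ((if min (b k) d ≤ z then ℓ k else 0) + if k = n then ℓ n else 0) := by
      rw [Summable.tsum_add (hψs z) hs2, tsum_ite_eq]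
    rw [e1]
    refine Summable.tsum_le_tsum (fun k => ?_) ((hψs z).add hs2) (hψs w)
    by_cases hk : k = n
    · subst hk
      rw [if_neg (not_le.2 hz), if_pos rfl, if_pos hw, zero_add]
    · rw [if_neg hk, add_zero]
      have hzw : z ≤ w := le_trans hz.le hw
      split
      · rename_i h
        rw [if_pos (le_trans h hzw)]
      · exact h0le w k
  -- the set S
  set S : Set ℝ := {z | z ∈ Icc c d ∧
    f z - f c ≤ F z + K * (ψ z - ψ c) + ε₀ * (z - c)} with hSdef
  have hcS : c ∈ S := by
    constructor
    · exact ⟨le_rfl, hcd⟩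
    · have : F c = 0 := by simp [hFdef]
      simp [this]
  have hSne : S.Nonempty := ⟨c, hcS⟩
  have hSbdd : BddAbove S := ⟨d, fun z hz => hz.1.2⟩
  set m : ℝ := sSup S with hmdef
  have hmIcc : m ∈ Icc c d := ⟨le_csSup hSbdd hcS, csSup_le hSne (fun z hz => hz.1.2)⟩
  have hmS : m ∈ S := by
    obtain ⟨u, hu_mono, hu_tendsto, hu_mem⟩ := exists_seq_tendsto_sSup hSne hSbdd
    refine ⟨hmIcc, ?_⟩
    have h1 : Tendsto (fun n => f (u n) - f c) atTop (𝓝 (f m - f c)) :=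
      ((hf.tendsto m).comp hu_tendsto).sub_const _
    have h2 : Tendsto (fun n => F (u n) + K * (ψ m - ψ c) + ε₀ * (u n - c)) atTop
        (𝓝 (F m + K * (ψ m - ψ c) + ε₀ * (m - c))) := by
      refine Tendsto.add (Tendsto.add ((hFcont.tendsto m).comp hu_tendsto) tendsto_const_nhds) ?_
      exact (tendsto_const_nhds.mul (hu_tendsto.sub_const _))
    refine le_of_tendsto_of_tendsto' h1 h2 fun n => ?_
    have hP := (hu_mem n).2
    have hum : u n ≤ m := le_csSup hSbdd (hu_mem n)
    have hψum : K * (ψ (u n) - ψ c) ≤ K * (ψ m - ψ c) := by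
      have := hψmono (u n) m hum
      nlinarith
    linarith
  have hmd : m = d := by
    by_contra hne
    have hmlt : m < d := lt_of_le_of_ne hmIcc.2 hne
    have hcontra : ∃ y ∈ S, m < y := by
      by_cases hmU : m ∈ ⋃ n, Ioo (a n) (b n)
      · -- inside a covering interval
        obtain ⟨n, hn⟩ := mem_iUnion.1 hmU
        set y : ℝ := min (b n) d with hydef
        have hmy : m < y := lt_min hn.2 hmlt
        have hyd : y ≤ d := min_le_right _ _
        have hfy : f y - f m ≤ K * ℓ n := by
          have h1 := hHolder y m
          have h2 : |y - m| ^ α ≤ (b n - a n) ^ α := by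
            apply Real.rpow_le_rpow (abs_nonneg _) _ hα0.le
            rw [abs_of_nonneg (by linarith)]
            have : y ≤ b n := min_le_left _ _
            linarith [hn.1]
          calc f y - f m ≤ |f y - f m| := le_abs_self _
            _ ≤ K * |y - m| ^ α := h1
            _ ≤ K * (b n - a n) ^ α := (mul_le_mul_iff_right₀ hK).2 h2
        have hψy : ψ m + ℓ n ≤ ψ y := hψjump n m y hmy le_rfl
        have hFy : F m ≤ F y := by
          rw [hFadd m y hmy.le]
          linarith [hIocnonneg m y]
        refine ⟨y, ⟨⟨hmIcc.1.trans hmy.le, hyd⟩, ?_⟩, hmy⟩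
        have hP := hmS.2
        have hKψ : K * (ψ m + ℓ n) ≤ K * ψ y := (mul_le_mul_iff_right₀ hK).2 hψy
        nlinarith [hε₀.le, hmy.le]
      · -- outside the union, so not in E
        have hmE : m ∉ E := fun h => hmU (hcover h)
        have hd1 := hderiv m hmE
        rw [hasDerivAt_iff_tendsto_slope] at hd1
        have hslope : ∀ᶠ y in 𝓝[>] m, |slope f m y - f' m| < ε₀/2 := by
          have h := hd1.mono_left
            (nhdsWithin_mono m (fun z (hz : z ∈ Ioi m) => ne_of_gt hz))
          have h2 := Metric.tendsto_nhds.1 h (ε₀/2) (by linarith)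
          simpa [Real.dist_eq] using h2
        obtain ⟨δV, hδV0, hδV⟩ := Metric.continuousWithinAt_iff.1 (hderivcont m hmE) (ε₀/2)
          (by linarith)
        have e1 : ∀ᶠ y in 𝓝[>] m, y < d :=
          (gt_mem_nhds hmlt).filter_mono nhdsWithin_le_nhds
        have e2 : ∀ᶠ y in 𝓝[>] m, dist y m < δV := by
          refine Filter.Eventually.filter_mono nhdsWithin_le_nhds ?_
          filter_upwards [Metric.ball_mem_nhds m hδV0] with y hy
          simpa [Metric.mem_ball] using hy
        have e3 : ∀ᶠ y in 𝓝[>] m, m < y := eventually_mem_nhdsWithin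
        obtain ⟨y, hyd, hydist, hyslope, hym⟩ := (e1.and (e2.and (hslope.and e3))).exists
        have hslopey : f y - f m ≤ (f' m + ε₀/2) * (y - m) := by
          have h2 := (abs_lt.1 hyslope).2
          rw [slope_def_field] at h2
          have h3 : (f y - f m) / (y - m) < f' m + ε₀/2 := by linarith
          calc f y - f m = (f y - f m) / (y - m) * (y - m) :=
                (div_mul_cancel₀ _ (sub_ne_zero.2 (ne_of_gt hym))).symm
            _ ≤ (f' m + ε₀/2) * (y - m) := by
                apply mul_le_mul_of_nonneg_right h3.le (by linarith)
        have hFy : F m + (f' m - ε₀/2) * (y - m) ≤ F y := by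
          rw [hFadd m y hym.le]
          have hconst : ∫ t in Ioc m y, (f' m - ε₀/2) ≤ ∫ t in Ioc m y, |f' t| := by
            refine setIntegral_mono_ae_restrict (integrableOn_const ?_)
              habs.integrableOn ?_
            · rw [Real.volume_Ioc]; exact ENNReal.ofReal_ne_top
            · filter_upwards [ae_restrict_of_ae hEae, ae_restrict_mem measurableSet_Ioc]
                with z hz1 hz2
              have hzV : dist z m < δV := by
                rw [Real.dist_eq, abs_of_pos (by linarith [hz2.1] : (0:ℝ) < z - m)]
                have hd2 : dist y m = y - m := by
                  rw [Real.dist_eq, abs_of_pos (by linarith)]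
                linarith [hz2.2, hd2 ▸ hydist]
              have h4 := hδV hz1 hzV
              rw [Real.dist_eq] at h4
              have h5 := (abs_lt.1 h4).1
              calc f' m - ε₀/2 ≤ f' z := by linarith
                _ ≤ |f' z| := le_abs_self _
          have hconstval : ∫ t in Ioc m y, (f' m - ε₀/2) = (f' m - ε₀/2) * (y - m) := by
            rw [setIntegral_const, Real.volume_real_Ioc_of_le (by linarith),
              smul_eq_mul]
            ring
          linarith [hconstval ▸ hconst]
        refine ⟨y, ⟨⟨hmIcc.1.trans hym.le, hyd.le⟩, ?_⟩, hym⟩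
        have hP := hmS.2
        have hψy := hψmono m y hym.le
        have hKψ : K * (ψ m - ψ c) ≤ K * (ψ y - ψ c) := by nlinarith
        nlinarith [hslopey, hFy, hP, hKψ, hym.le, hε₀.le]
    obtain ⟨y, hyS, hmy⟩ := hcontra
    exact absurd (le_csSup hSbdd hyS) (not_le.2 hmy)
  -- conclude
  have hP := hmS.2
  rw [hmd] at hP
  have hFd : F d = ∫ t in Ioc c d, |f' t| := by
    rw [hFdef]
    simp only
    rw [intervalIntegral.integral_of_le hcd]
  have hψbnd : K * (ψ d - ψ c) ≤ K * η :=
    mul_le_mul_of_nonneg_left (by linarith [hψle d, hψnonneg c]) hK.le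
  have hKη : K * η = ζ/2 := by rw [hηdef]; field_simp
  have hε₀d : ε₀ * (d - c) ≤ ζ/2 := by
    rw [hε₀def, div_mul_eq_mul_div, div_le_div_iff₀ (by linarith) (by norm_num)]
    nlinarith
  linarith

/-- A Hölder continuous function, `C¹` off a set of zero `α`-dimensional Hausdorff
measure, with integrable derivative, is absolutely continuous on compact intervals. -/
theorem stmt_3 (E : Set ℝ) (α : ℝ) (hα0 : 0 < α) (hα1 : α < 1)
    (f f' : ℝ → ℝ)
    (hHolder : ∃ K > 0, ∀ x y : ℝ, |f x - f y| ≤ K * |x - y| ^ α)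
    (hderiv : ∀ x ∉ E, HasDerivAt f (f' x) x)
    (hderivcont : ContinuousOn f' Eᶜ)
    (hE : μH[α] E = 0)
    (hint : IntegrableOn f' Eᶜ volume) :
    ∀ a b : ℝ, a ≤ b →
      ∀ ε > (0 : ℝ), ∃ δ > (0 : ℝ),
        ∀ (N : ℕ) (c d : Fin N → ℝ),
          (∀ j, a ≤ c j ∧ c j < d j ∧ d j ≤ b) →
          (∀ i j, i ≠ j → Disjoint (Ioo (c i) (d i)) (Ioo (c j) (d j))) →
          (∑ j, (d j - c j)) < δ →
          (∑ j, |f (d j) - f (c j)|) < ε := by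
  obtain ⟨K, hK, hHolder⟩ := hHolder
  intro a b hab ε hε
  have hvol : volume E = 0 := by
    have h1 : volume E ≤ 0 := by
      calc volume E = μH[1] E := by rw [← hausdorffMeasure_real]
        _ ≤ μH[α] E := Measure.hausdorffMeasure_mono hα1.le E
        _ = 0 := hE
    exact le_antisymm h1 (by simp)
  have habs : Integrable (fun t => |f' t|) volume := by
    have h1 : IntegrableOn (fun t => |f' t|) Eᶜ volume := hint.abs
    have h2 : IntegrableOn (fun t => |f' t|) E volume := by
      rw [IntegrableOn, Measure.restrict_eq_zero.2 hvol]
      exact integrable_zero_measure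
    have h3 := h1.union h2
    rwa [compl_union_self, integrableOn_univ] at h3
  have hkey : ∀ u v : ℝ, u ≤ v → |f v - f u| ≤ ∫ t in Ioc u v, |f' t| := by
    intro u v huv
    rw [abs_sub_le_iff]
    constructor
    · exact key_lemma E hα0 hα1 f f' hK hHolder hderiv hderivcont hE hvol habs huv
    · have h2 := key_lemma E hα0 hα1 (fun z => -f z) (fun z => -f' z) hK
        (fun x y => by
          rw [show -f x - -f y = -(f x - f y) by ring, abs_neg]
          exact hHolder x y)
        (fun x hx => (hderiv x hx).neg)
        (hderivcont.neg)
        hE hvol (by simpa using habs) huv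
      have h3 : f u ≤ f v + ∫ (t : ℝ) in Ioc u v, |f' t| := by simpa using h2
      linarith
  have hlint : ∫⁻ t, ENNReal.ofReal |f' t| ∂volume ≠ ⊤ := by
    have h := (hasFiniteIntegral_iff_ofReal
      (Filter.Eventually.of_forall fun t => abs_nonneg (f' t))).1 habs.hasFiniteIntegral
    exact h.ne
  obtain ⟨δ', hδ'0, hδ'⟩ := exists_pos_setLIntegral_lt_of_measure_lt hlint
    (ε := ENNReal.ofReal ε) (ENNReal.ofReal_pos.2 hε).ne'
  obtain ⟨δ, hδ0, hδlt⟩ : ∃ δ : ℝ, 0 < δ ∧ ENNReal.ofReal δ < δ' := by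
    obtain ⟨r, hr0, h0r, hrδ'⟩ := ENNReal.lt_iff_exists_real_btwn.1 hδ'0
    exact ⟨r, ENNReal.ofReal_pos.1 h0r, hrδ'⟩
  refine ⟨δ, hδ0, ?_⟩
  intro N c d hcd hdisj hsum
  have hIocdisj : ∀ i j, i ≠ j → Disjoint (Ioc (c i) (d i)) (Ioc (c j) (d j)) := by
    intro i j hij
    rw [Set.disjoint_left]
    intro z hzi hzj
    obtain ⟨w, hw1, hw2⟩ := exists_between (max_lt hzi.1 hzj.1)
    have h1 : w ∈ Ioo (c i) (d i) := ⟨(le_max_left _ _).trans_lt hw1, hw2.trans_le hzi.2⟩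
    have h2 : w ∈ Ioo (c j) (d j) := ⟨(le_max_right _ _).trans_lt hw1, hw2.trans_le hzj.2⟩
    exact Set.disjoint_left.1 (hdisj i j hij) h1 h2
  set U : Set ℝ := ⋃ j, Ioc (c j) (d j) with hU
  have hUmeas : volume U < δ' := by
    calc volume U ≤ ∑ j, volume (Ioc (c j) (d j)) := measure_iUnion_fintype_le _ _
      _ = ∑ j, ENNReal.ofReal (d j - c j) := by simp [Real.volume_Ioc]
      _ = ENNReal.ofReal (∑ j, (d j - c j)) :=
          (ENNReal.ofReal_sum_of_nonneg (fun j _ => by linarith [(hcd j).2.1])).symm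
      _ < ENNReal.ofReal δ := (ENNReal.ofReal_lt_ofReal_iff hδ0).2 hsum
      _ < δ' := hδlt
  have hlintU := hδ' U hUmeas
  have hintU : ∫ t in U, |f' t| < ε := by
    have h5 : ENNReal.ofReal (∫ t in U, |f' t|) = ∫⁻ t in U, ENNReal.ofReal |f' t| :=
      ofReal_integral_eq_lintegral_ofReal habs.integrableOn
        (Filter.Eventually.of_forall fun t => abs_nonneg _)
    exact (ENNReal.ofReal_lt_ofReal_iff hε).1 (h5 ▸ hlintU)
  calc ∑ j, |f (d j) - f (c j)|
      ≤ ∑ j, ∫ t in Ioc (c j) (d j), |f' t| :=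
        Finset.sum_le_sum (fun j _ => hkey _ _ (hcd j).2.1.le)
    _ = ∫ t in U, |f' t| := by
        rw [hU, MeasureTheory.integral_iUnion (fun j => measurableSet_Ioc)
          (fun i j hij => hIocdisj i j hij) habs.integrableOn, tsum_fintype]
    _ < ε := hintU
end

section
/- Let E ⊂ ℝⁿ be a Borel set, let H ⊂ ℝⁿ be an (n−1)-dimensional affine hyperplane, and for w ∈ H let L_w be the line through w orthogonal to H. Suppose there exists a Borel set G ⊂ H with H^{n−1}(G) > 0 such that H^t(E ∩ L_w) > 0 for every w ∈ G, where t > 0. Then H^{n−1+t}(E) > 0. -/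
open MeasureTheory Set
open scoped ENNReal NNReal Topology
open scoped RealInnerProductSpace

noncomputable def preH {X : Type*} [EMetricSpace X] (d : ℝ) (r : ℝ≥0∞) (s : Set X) : ℝ≥0∞ :=
  ⨅ (U : ℕ → Set X) (_ : s ⊆ ⋃ i, U i) (_ : ∀ i, EMetric.diam (U i) ≤ r),
    ∑' i, ⨆ _ : (U i).Nonempty, EMetric.diam (U i) ^ d

lemma preH_anti {X : Type*} [EMetricSpace X] {d : ℝ} {r₁ r₂ : ℝ≥0∞} (h : r₁ ≤ r₂) (s : Set X) :
    preH d r₂ s ≤ preH d r₁ s := by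
  refine le_iInf fun U => le_iInf fun h1 => le_iInf fun h2 => ?_
  exact iInf_le_of_le U (iInf_le_of_le h1 (iInf_le_of_le (fun i => (h2 i).trans h) le_rfl))

lemma preH_le {X : Type*} [EMetricSpace X] {d : ℝ} {r : ℝ≥0∞} {s : Set X} (U : ℕ → Set X)
    (h1 : s ⊆ ⋃ i, U i) (h2 : ∀ i, EMetric.diam (U i) ≤ r) :
    preH d r s ≤ ∑' i, ⨆ _ : (U i).Nonempty, EMetric.diam (U i) ^ d :=
  iInf_le_of_le U (iInf_le_of_le h1 (iInf_le_of_le h2 le_rfl))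

lemma hausdorffMeasure_eq_preH {X : Type*} [EMetricSpace X] [MeasurableSpace X] [BorelSpace X]
    (d : ℝ) (s : Set X) :
    μH[d] s = ⨆ (r : ℝ≥0∞) (_ : 0 < r), preH d r s :=
  Measure.hausdorffMeasure_apply d s

lemma euclid_bound (m : ℕ) :
    ∃ C : ℝ≥0∞, C ≠ 0 ∧ C ≠ ∞ ∧ ∀ T : Set (EuclideanSpace ℝ (Fin m)),
      μH[(m : ℝ)] T ≤ C * EMetric.diam T ^ (m : ℝ) := by
  rcases Nat.eq_zero_or_pos m with hm | hm
  · subst hm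
    haveI : Subsingleton (EuclideanSpace ℝ (Fin 0)) :=
      ⟨fun a b => by ext i; exact absurd i.2 (by omega)⟩
    refine ⟨1, one_ne_zero, ENNReal.one_ne_top, fun T => ?_⟩
    rcases T.eq_empty_or_nonempty with rfl | ⟨x, hx⟩
    · simp
    · have hT : T ⊆ {x} := fun y _ => by simp [Subsingleton.elim y x]
      have h0 : ((0:ℕ) : ℝ) = (0 : ℝ) := by norm_num
      rw [h0]
      have hle : μH[(0:ℝ)] T ≤ μH[(0:ℝ)] ({x} : Set (EuclideanSpace ℝ (Fin 0))) :=
        measure_mono hT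
      rw [Measure.hausdorffMeasure_zero_singleton] at hle
      simpa [ENNReal.rpow_zero] using hle
  · set Kc : ℝ≥0 := (Fintype.card (Fin m) : ℝ≥0) ^ (1 / (2:ℝ≥0∞)).toReal with hKc
    set C : ℝ≥0∞ := ((Kc : ℝ≥0∞) ^ (m : ℝ) + 1) * 2 ^ m with hC
    have hC0 : C ≠ 0 := by
      simp only [hC]
      refine mul_ne_zero ?_ (by positivity)
      simp [add_eq_zero]
    have hCtop : C ≠ ∞ := by
      apply ENNReal.mul_ne_top
      · exact ENNReal.add_ne_top.2 ⟨ENNReal.rpow_ne_top_of_nonneg (by positivity)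
          ENNReal.coe_ne_top, ENNReal.one_ne_top⟩
      · exact (ENNReal.pow_ne_top ENNReal.ofNat_ne_top)
    refine ⟨C, hC0, hCtop, fun T => ?_⟩
    by_cases hD : EMetric.diam T = ∞
    · rw [hD, ENNReal.top_rpow_of_pos (by positivity : (0:ℝ) < (m:ℝ)), ENNReal.mul_top hC0]
      exact le_top
    rcases T.eq_empty_or_nonempty with rfl | ⟨p, hp⟩
    · simp
    set D : ℝ≥0∞ := EMetric.diam T with hDdef
    set f := WithLp.equiv 2 (Fin m → ℝ) with hf
    have hg : LipschitzWith Kc f.symm := by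
      intro x y
      have := PiLp.antilipschitzWith_ofLp 2 (fun _ : Fin m => ℝ) (f.symm x) (f.symm y)
      exact this
    have hμY : (μH[(m : ℝ)] : Measure (Fin m → ℝ)) = volume := by
      have := hausdorffMeasure_pi_real (ι := Fin m)
      simpa using this
    have hsub : f '' T ⊆ Metric.closedBall (f p) D.toReal := by
      rintro _ ⟨y, hy, rfl⟩
      have h1 : edist (f y) (f p) ≤ D := by
        have := PiLp.lipschitzWith_ofLp 2 (fun _ : Fin m => ℝ) y p
        simp only [ENNReal.coe_one, one_mul] at this
        exact this.trans (EMetric.edist_le_diam_of_mem hy hp)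
      rw [Metric.mem_closedBall, dist_edist]
      exact ENNReal.toReal_mono hD h1
    have hvol : volume (Metric.closedBall (f p) D.toReal) = (2 * D) ^ m := by
      rw [closedBall_pi _ ENNReal.toReal_nonneg, volume_pi_pi]
      have h2 : ENNReal.ofReal (2 * D.toReal) = 2 * D := by
        rw [ENNReal.ofReal_mul (by norm_num)]
        simp [ENNReal.ofReal_toReal hD]
      simp [Real.volume_closedBall, h2]
    calc μH[(m : ℝ)] T = μH[(m : ℝ)] (f.symm '' (f '' T)) := by rw [Equiv.symm_image_image]
      _ ≤ (Kc : ℝ≥0∞) ^ (m : ℝ) * μH[(m : ℝ)] (f '' T) :=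
          hg.hausdorffMeasure_image_le (by positivity) _
      _ = (Kc : ℝ≥0∞) ^ (m : ℝ) * volume (f '' T) := by rw [hμY]
      _ ≤ (Kc : ℝ≥0∞) ^ (m : ℝ) * volume (Metric.closedBall (f p) D.toReal) :=
          mul_le_mul_right (measure_mono hsub) _
      _ = (Kc : ℝ≥0∞) ^ (m : ℝ) * ((2 * D) ^ m) := by rw [hvol]
      _ = ((Kc : ℝ≥0∞) ^ (m : ℝ) * 2 ^ m) * D ^ (m : ℝ) := by
          rw [mul_pow, ← ENNReal.rpow_natCast D]; ring
      _ ≤ C * D ^ (m : ℝ) := by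
          apply mul_le_mul_left
          rw [hC]
          exact mul_le_mul_left (le_add_of_nonneg_right zero_le_one) _

lemma plane_bound (n : ℕ) (hn : 1 ≤ n) (w : EuclideanSpace ℝ (Fin n)) (hw : ‖w‖ = 1) (c : ℝ) :
    ∃ C : ℝ≥0∞, C ≠ 0 ∧ C ≠ ∞ ∧ ∀ S : Set (EuclideanSpace ℝ (Fin n)),
      S ⊆ {x | ⟪x, w⟫ = c} → μH[(n : ℝ) - 1] S ≤ C * EMetric.diam S ^ ((n : ℝ) - 1) := by
  classical
  have hw0 : w ≠ 0 := by intro h; rw [h, norm_zero] at hw; norm_num at hw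
  haveI : Fact (Module.finrank ℝ (EuclideanSpace ℝ (Fin n)) = (n - 1) + 1) :=
    ⟨by rw [finrank_euclideanSpace_fin]; omega⟩
  set K := (ℝ ∙ w)ᗮ with hK
  have hKrank : Module.finrank ℝ K = n - 1 := Submodule.finrank_orthogonal_span_singleton hw0
  set m := Module.finrank ℝ K with hm
  have hcast : ((m : ℝ)) = (n : ℝ) - 1 := by
    rw [hKrank, Nat.cast_sub hn]; norm_num
  obtain ⟨C, hC0, hCtop, hCb⟩ := euclid_bound m
  refine ⟨C, hC0, hCtop, fun S hS => ?_⟩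
  set B := stdOrthonormalBasis ℝ K with hB
  set ψ : K → EuclideanSpace ℝ (Fin n) := fun v => c • w + (v : EuclideanSpace ℝ (Fin n)) with hψ
  have hψiso : Isometry ψ := by
    intro v v'
    simp only [hψ, edist_add_left]
    exact (Submodule.subtypeₗᵢ K).isometry v v'
  set Φ : EuclideanSpace ℝ (Fin m) → EuclideanSpace ℝ (Fin n) := fun u => ψ (B.repr.symm u)
    with hΦ
  have hΦiso : Isometry Φ := hψiso.comp B.repr.symm.isometry
  have hrange : S ⊆ Set.range Φ := by
    intro s hs
    have hmem : s - c • w ∈ K := by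
      rw [hK, Submodule.mem_orthogonal_singleton_iff_inner_right]
      have hsc : ⟪s, w⟫ = c := hS hs
      rw [real_inner_comm]
      rw [inner_sub_left, real_inner_smul_left, real_inner_self_eq_norm_mul_norm, hw, hsc]
      ring
    refine ⟨B.repr ⟨s - c • w, hmem⟩, ?_⟩
    simp only [hΦ, hψ, LinearIsometryEquiv.symm_apply_apply]
    abel
  have himg : Φ '' (Φ ⁻¹' S) = S := by
    rw [Set.image_preimage_eq_inter_range, Set.inter_eq_self_of_subset_left hrange]
  set T := Φ ⁻¹' S with hT
  have hd0 : (0:ℝ) ≤ (n : ℝ) - 1 := by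
    have : (1:ℝ) ≤ (n:ℝ) := by exact_mod_cast hn
    linarith
  have h1 : μH[(n : ℝ) - 1] S = μH[(n : ℝ) - 1] T := by
    rw [← himg]
    exact hΦiso.hausdorffMeasure_image (Or.inl hd0) T
  have h2 : EMetric.diam T = EMetric.diam S := by
    rw [← himg]; exact (hΦiso.ediam_image T).symm
  rw [h1, ← h2, ← hcast]
  exact hCb T

/-- Slicing lemma: if positively many parallel lines orthogonal to a hyperplane meet a
Borel set `E` in positive `t`-dimensional Hausdorff measure, then
`H^{n-1+t}(E) > 0`. -/
theorem stmt_4 (n : ℕ) (t : ℝ) (ht : 0 < t)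
    (E : Set (EuclideanSpace ℝ (Fin n))) (hE : MeasurableSet E)
    (w : EuclideanSpace ℝ (Fin n)) (hw : ‖w‖ = 1) (c : ℝ)
    (G : Set (EuclideanSpace ℝ (Fin n))) (hG : MeasurableSet G)
    (hGH : G ⊆ {x | ⟪x, w⟫ = c})
    (hGpos : 0 < μH[(n : ℝ) - 1] G)
    (hslice : ∀ x ∈ G, 0 < μH[t] (E ∩ {y | ∃ τ : ℝ, y = x + τ • w})) :
    0 < μH[(n : ℝ) - 1 + t] E := by
  classical
  by_contra hcon
  have hE0 : μH[(n : ℝ) - 1 + t] E = 0 := le_zero_iff.mp (not_lt.mp hcon)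
  have hn : 1 ≤ n := by
    by_contra hn'
    have hn0 : n = 0 := by omega
    subst hn0
    have : w = 0 := by ext i; exact absurd i.2 (by omega)
    rw [this, norm_zero] at hw
    norm_num at hw
  have hd0 : (0:ℝ) ≤ (n : ℝ) - 1 := by
    have : (1:ℝ) ≤ (n:ℝ) := by exact_mod_cast hn
    linarith
  obtain ⟨C, hC0, hCtop, hCb⟩ := plane_bound n hn w hw c
  set ν : Measure (EuclideanSpace ℝ (Fin n)) := μH[(n : ℝ) - 1] with hν
  -- the projection onto the hyperplane along w
  set P : EuclideanSpace ℝ (Fin n) → EuclideanSpace ℝ (Fin n) := fun y => y + (c - ⟪y, w⟫) • w with hP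
  have hproj : ∀ v : EuclideanSpace ℝ (Fin n), ‖v - ⟪v, w⟫ • w‖ ≤ ‖v‖ := by
    intro v
    have h1 : ‖v - ⟪v, w⟫ • w‖ ^ 2 = ‖v‖ ^ 2 - ⟪v, w⟫ ^ 2 := by
      rw [norm_sub_sq_real, real_inner_smul_right, norm_smul, Real.norm_eq_abs, hw, mul_one,
        sq_abs]
      ring
    nlinarith [norm_nonneg (v - ⟪v, w⟫ • w), norm_nonneg v, sq_nonneg ⟪v, w⟫]
  have hPlip : LipschitzWith 1 P := by
    apply LipschitzWith.of_dist_le_mul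
    intro y y'
    have hsub : P y - P y' = (y - y') - ⟪y - y', w⟫ • w := by
      simp only [hP, inner_sub_left, sub_smul]
      abel
    simp only [NNReal.coe_one, one_mul]
    rw [dist_eq_norm, dist_eq_norm, hsub]
    exact hproj _
  have hPplane : ∀ y, ⟪P y, w⟫ = c := by
    intro y
    simp only [hP, inner_add_left, real_inner_smul_left]
    rw [real_inner_self_eq_norm_mul_norm, hw]
    ring
  have hPline : ∀ x, ⟪x, w⟫ = c → ∀ y, (∃ τ : ℝ, y = x + τ • w) → P y = x := by
    rintro x hx y ⟨τ, rfl⟩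
    simp only [hP, inner_add_left, real_inner_smul_left]
    rw [real_inner_self_eq_norm_mul_norm, hw, hx]
    have : (c - (c + τ * (1 * 1))) = -τ := by ring
    rw [this]
    simp only [neg_smul]
    abel
  -- the slices
  set slc : EuclideanSpace ℝ (Fin n) → Set (EuclideanSpace ℝ (Fin n)) := fun x => E ∩ {y | ∃ τ : ℝ, y = x + τ • w} with hslc
  -- decompose G
  set Gs : ℕ → ℕ → Set (EuclideanSpace ℝ (Fin n)) := fun k j =>
    {x | x ∈ G ∧ ((k : ℝ≥0∞) + 1)⁻¹ ≤ preH t ((j : ℝ≥0∞))⁻¹ (slc x)} with hGs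
  have hcover : G ⊆ ⋃ (k : ℕ) (j : ℕ), Gs k j := by
    intro x hx
    have h1 : 0 < μH[t] (slc x) := hslice x hx
    obtain ⟨k, hk⟩ := ENNReal.exists_inv_nat_lt h1.ne'
    have hk' : ((k : ℝ≥0∞) + 1)⁻¹ < μH[t] (slc x) :=
      lt_of_le_of_lt (ENNReal.inv_le_inv.mpr (le_add_of_nonneg_right zero_le_one)) hk
    rw [hausdorffMeasure_eq_preH] at hk'
    rw [lt_iSup_iff] at hk'
    obtain ⟨r, hr⟩ := hk'
    rw [lt_iSup_iff] at hr
    obtain ⟨hr0, hlt⟩ := hr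
    obtain ⟨j, hj⟩ := ENNReal.exists_inv_nat_lt hr0.ne'
    refine Set.mem_iUnion.2 ⟨k, Set.mem_iUnion.2 ⟨j, hx, ?_⟩⟩
    exact hlt.le.trans (preH_anti hj.le _)
  have hexists : ∃ k j : ℕ, ν (Gs k j) ≠ 0 := by
    by_contra hall
    push_neg at hall
    have h1 : ν G ≤ ∑' (k : ℕ), ∑' (j : ℕ), ν (Gs k j) := by
      refine (measure_mono hcover).trans ?_
      refine (measure_iUnion_le _).trans ?_
      exact ENNReal.tsum_le_tsum fun k => measure_iUnion_le _
    simp only [hall, tsum_zero] at h1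
    exact hGpos.ne' (le_antisymm h1 (zero_le))
  obtain ⟨k, j, hkj⟩ := hexists
  -- key estimate
  have key : ∀ δ : ℝ≥0∞, 0 < δ → ν (Gs k j) ≤ (((k : ℝ≥0∞) + 1) * C) * δ := by
    intro δ hδ
    -- extract a cover of E
    have h0 : preH ((n : ℝ) - 1 + t) ((j : ℝ≥0∞))⁻¹ E = 0 := by
      refine le_antisymm ?_ (zero_le)
      have h1 : preH ((n : ℝ) - 1 + t) ((j : ℝ≥0∞))⁻¹ E ≤
          ⨆ (r : ℝ≥0∞) (_ : 0 < r), preH ((n : ℝ) - 1 + t) r E :=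
        le_iSup₂ (f := fun r (_ : 0 < r) => preH ((n : ℝ) - 1 + t) r E)
          ((j : ℝ≥0∞))⁻¹ (by simp)
      rw [← hausdorffMeasure_eq_preH] at h1
      exact h1.trans hE0.le
    have hlt : preH ((n : ℝ) - 1 + t) ((j : ℝ≥0∞))⁻¹ E < δ := by rw [h0]; exact hδ
    rw [preH] at hlt
    simp only [iInf_lt_iff] at hlt
    obtain ⟨U, hU1, hU2, hU3⟩ := hlt
    -- the measurable hulls of the projections
    set T : ℕ → Set (EuclideanSpace ℝ (Fin n)) := fun i => toMeasurable ν (P '' U i) with hT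
    have hTmeas : ∀ i, MeasurableSet (T i) := fun i => measurableSet_toMeasurable _ _
    have hTbound : ∀ i, EMetric.diam (U i) ^ t * ν (T i) ≤
        C * ⨆ _ : (U i).Nonempty, EMetric.diam (U i) ^ ((n : ℝ) - 1 + t) := by
      intro i
      rcases (U i).eq_empty_or_nonempty with hUe | hUne
      · have : ν (T i) = 0 := by
          rw [hT]
          simp only [measure_toMeasurable]
          rw [hUe]
          simp
        rw [this, mul_zero]
        exact zero_le
      · rw [iSup_pos hUne]
        have hν1 : ν (T i) ≤ C * EMetric.diam (U i) ^ ((n : ℝ) - 1) := by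
          have hνT : ν (T i) = ν (P '' U i) := measure_toMeasurable _
          rw [hνT]
          have hplane : P '' U i ⊆ {x | ⟪x, w⟫ = c} := by
            rintro _ ⟨y, _, rfl⟩
            exact hPplane y
          refine (hCb _ hplane).trans ?_
          apply mul_le_mul_right
          apply ENNReal.rpow_le_rpow _ hd0
          have := hPlip.ediam_image_le (U i)
          simp only [ENNReal.coe_one, one_mul] at this
          exact this
        set D := EMetric.diam (U i) with hD
        rcases eq_or_ne D 0 with hD0 | hD0
        · rw [hD0, ENNReal.zero_rpow_of_pos ht, zero_mul]
          exact zero_le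
        rcases eq_or_ne D ∞ with hDt | hDt
        · rw [hDt, ENNReal.top_rpow_of_pos (by linarith : (0:ℝ) < (n : ℝ) - 1 + t),
            ENNReal.mul_top hC0]
          exact le_top
        rw [ENNReal.rpow_add _ _ hD0 hDt]
        calc D ^ t * ν (T i) ≤ D ^ t * (C * D ^ ((n : ℝ) - 1)) := mul_le_mul_right hν1 _
          _ = C * (D ^ ((n : ℝ) - 1) * D ^ t) := by ring
    -- the comparison function
    set g : EuclideanSpace ℝ (Fin n) → ℝ≥0∞ := fun x => ∑' i, (T i).indicator (fun _ => EMetric.diam (U i) ^ t) x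
      with hg
    have hgm : Measurable g :=
      Measurable.ennreal_tsum fun i => measurable_const.indicator (hTmeas i)
    have hpoint : ∀ x ∈ Gs k j, ((k : ℝ≥0∞) + 1)⁻¹ ≤ g x := by
      rintro x ⟨hxG, hxpre⟩
      refine hxpre.trans ?_
      have hc1 : preH t ((j : ℝ≥0∞))⁻¹ (slc x) ≤
          ∑' i, ⨆ _ : (U i ∩ {y | ∃ τ : ℝ, y = x + τ • w}).Nonempty,
            EMetric.diam (U i ∩ {y | ∃ τ : ℝ, y = x + τ • w}) ^ t := by
        apply preH_le
        · intro y hy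
          obtain ⟨hyE, hyL⟩ := hy
          obtain ⟨i, hi⟩ := Set.mem_iUnion.1 (hU1 hyE)
          exact Set.mem_iUnion.2 ⟨i, hi, hyL⟩
        · intro i
          exact (EMetric.diam_mono Set.inter_subset_left).trans (hU2 i)
      refine hc1.trans ?_
      apply ENNReal.tsum_le_tsum
      intro i
      apply iSup_le
      rintro ⟨y, hyU, hyL⟩
      have hxT : x ∈ T i := subset_toMeasurable _ _ ⟨y, hyU, hPline x (hGH hxG) y hyL⟩
      rw [Set.indicator_of_mem hxT]
      exact ENNReal.rpow_le_rpow (EMetric.diam_mono Set.inter_subset_left) ht.le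
    -- Chebyshev
    have hcheb : ((k : ℝ≥0∞) + 1)⁻¹ * ν {x | ((k : ℝ≥0∞) + 1)⁻¹ ≤ g x} ≤ ∫⁻ x, g x ∂ν :=
      mul_meas_ge_le_lintegral hgm _
    have hint : ∫⁻ x, g x ∂ν ≤ C * δ := by
      rw [hg]
      rw [lintegral_tsum fun i => (measurable_const.indicator (hTmeas i)).aemeasurable]
      have h2 : ∀ i : ℕ, ∫⁻ x, (T i).indicator (fun _ => EMetric.diam (U i) ^ t) x ∂ν =
          EMetric.diam (U i) ^ t * ν (T i) := fun i => lintegral_indicator_const (hTmeas i) _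
      rw [tsum_congr h2]
      calc ∑' i, EMetric.diam (U i) ^ t * ν (T i)
          ≤ ∑' i, C * ⨆ _ : (U i).Nonempty, EMetric.diam (U i) ^ ((n : ℝ) - 1 + t) :=
            ENNReal.tsum_le_tsum hTbound
        _ = C * ∑' i, ⨆ _ : (U i).Nonempty, EMetric.diam (U i) ^ ((n : ℝ) - 1 + t) :=
            ENNReal.tsum_mul_left
        _ ≤ C * δ := mul_le_mul_right hU3.le _
    have hmono : ν (Gs k j) ≤ ν {x | ((k : ℝ≥0∞) + 1)⁻¹ ≤ g x} :=
      measure_mono fun x hx => hpoint x hx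
    have hknz : ((k : ℝ≥0∞) + 1)⁻¹ ≠ 0 :=
      ENNReal.inv_ne_zero.mpr (ENNReal.add_ne_top.2 ⟨ENNReal.natCast_ne_top k, ENNReal.one_ne_top⟩)
    have hkfin : ((k : ℝ≥0∞) + 1)⁻¹ ≠ ∞ := ENNReal.inv_ne_top.mpr (by simp [add_eq_zero])
    calc ν (Gs k j) = ((k : ℝ≥0∞) + 1) * (((k : ℝ≥0∞) + 1)⁻¹ * ν (Gs k j)) := by
          rw [← mul_assoc, ENNReal.mul_inv_cancel (by simp [add_eq_zero])
            (ENNReal.add_ne_top.2 ⟨ENNReal.natCast_ne_top k, ENNReal.one_ne_top⟩), one_mul]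
      _ ≤ ((k : ℝ≥0∞) + 1) * (((k : ℝ≥0∞) + 1)⁻¹ * ν {x | ((k : ℝ≥0∞) + 1)⁻¹ ≤ g x}) :=
          mul_le_mul_right (mul_le_mul_right hmono _) _
      _ ≤ ((k : ℝ≥0∞) + 1) * (C * δ) := mul_le_mul_right (hcheb.trans hint) _
      _ = (((k : ℝ≥0∞) + 1) * C) * δ := by ring
  -- conclude
  have hMfin : ((k : ℝ≥0∞) + 1) * C ≠ ∞ :=
    ENNReal.mul_ne_top (ENNReal.add_ne_top.2 ⟨ENNReal.natCast_ne_top k, ENNReal.one_ne_top⟩) hCtop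
  have htend : Filter.Tendsto (fun i : ℕ => (((k : ℝ≥0∞) + 1) * C) * ((i : ℝ≥0∞))⁻¹)
      Filter.atTop (nhds 0) := by
    have := ENNReal.Tendsto.const_mul (a := ((k : ℝ≥0∞) + 1) * C)
      ENNReal.tendsto_inv_nat_nhds_zero (Or.inr hMfin)
    simpa using this
  have hle : ν (Gs k j) ≤ 0 := by
    refine ge_of_tendsto' htend fun i => ?_
    exact key _ (by simp [ENNReal.inv_pos, ENNReal.natCast_ne_top])
  exact hkj (le_antisymm hle (zero_le))
end
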